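/- arXiv:1708.03599 — 3 statements merged into one kernel-verified Lean document; each statement's English description precedes it below -/
import Mathlib

section
/- Let a and S be symmetric bilinear forms on a real inner product space V, with a positive semidefinite. Suppose there exist constants 0 < c₀ ≤ c₁ such that c₀·a(v,v) ≤ S(v,v) ≤ c₁·a(v,v) for all v in a subspace W of V. Then for the form a_h(u,v) := a(Pu,Pv) + S(u−Pu, v−Pv), where P : V → V is a linear map with u − Pu ∈ W for all u and a(Pu, v − Pv) = 0 for all u,v, one has (min{1,c₀})·a(v,v) ≤ a_h(v,v) ≤ (max{1,c₁})·a(v,v) for all v ∈ V. -/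
/-- Spectral equivalence of the VEM bilinear form `a_h` with `a`. -/
theorem stmt0 {V : Type*} [NormedAddCommGroup V] [InnerProductSpace ℝ V]
    (a S : V →ₗ[ℝ] V →ₗ[ℝ] ℝ)
    (ha_symm : ∀ u v, a u v = a v u)
    (ha_psd : ∀ v, 0 ≤ a v v)
    (hS_symm : ∀ u v, S u v = S v u)
    (W : Submodule ℝ V) (c₀ c₁ : ℝ) (hc₀ : 0 < c₀) (hc : c₀ ≤ c₁)
    (hlow : ∀ v ∈ W, c₀ * a v v ≤ S v v)
    (hup : ∀ v ∈ W, S v v ≤ c₁ * a v v)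
    (P : V →ₗ[ℝ] V)
    (hPW : ∀ u, u - P u ∈ W)
    (hPorth : ∀ u v, a (P u) (v - P v) = 0)
    (ah : V → V → ℝ)
    (hah : ∀ u v, ah u v = a (P u) (P v) + S (u - P u) (v - P v)) :
    ∀ v, min 1 c₀ * a v v ≤ ah v v ∧ ah v v ≤ max 1 c₁ * a v v := by
  intro v
  have hsplit : a v v = a (P v) (P v) + a (v - P v) (v - P v) := by
    have h1 : a (P v) (v - P v) = 0 := hPorth v v
    have h2 : a (v - P v) (P v) = 0 := by rw [ha_symm]; exact h1
    have : v = P v + (v - P v) := by abel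
    calc a v v = a (P v + (v - P v)) (P v + (v - P v)) := by rw [← this]
    _ = a (P v) (P v) + a (v - P v) (v - P v) := by
        simp only [map_add, LinearMap.add_apply]
        linarith
  have hp := ha_psd (P v)
  have hw := ha_psd (v - P v)
  have hl := hlow (v - P v) (hPW v)
  have hu := hup (v - P v) (hPW v)
  rw [hah, hsplit]
  constructor
  · have hmin1 : min 1 c₀ ≤ 1 := min_le_left _ _
    have hmin2 : min 1 c₀ ≤ c₀ := min_le_right _ _
    nlinarith [mul_le_mul_of_nonneg_right hmin1 hp, mul_le_mul_of_nonneg_right hmin2 hw]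
  · have hmax1 : (1:ℝ) ≤ max 1 c₁ := le_max_left _ _
    have hmax2 : c₁ ≤ max 1 c₁ := le_max_right _ _
    nlinarith [mul_le_mul_of_nonneg_right hmax1 hp, mul_le_mul_of_nonneg_right hmax2 hw]
end

section
/- Let W be a finite-dimensional real inner product space with inner product s (symmetric positive definite bilinear form), let Ŵ ⊆ W be a subspace, and let E_D : W → Ŵ be a projection (E_D² = E_D, range E_D = Ŵ) satisfying s(E_D w, E_D w) ≤ C·s(w,w) for all w ∈ W with C ≥ 1. Then the operator M∘Ŝ on Ŵ, where Ŝ : Ŵ → Ŵ is defined by s restricted to Ŵ and M := E_D∘S̃^{-1}∘E_D^{T} with S̃ : W → W the s-Riesz map, satisfies: all eigenvalues λ of M∘Ŝ obey 1 ≤ λ ≤ C. In particular its condition number is at most C. -/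
/-- Abstract eigenvalue bound for the BDDC-preconditioned operator `M∘Ŝ`:
if `s(E_D w, E_D w) ≤ C s(w,w)` then every eigenvalue `λ` of `M∘Ŝ` on `Wh` (= `Ŵ`)
satisfies `1 ≤ λ ≤ C`.  The element `z = S̃⁻¹(E_D^T(Ŝ uhat))` is characterized by
`s(z, w) = s(uhat, E_D w)` for all `w`, and `M Ŝ uhat = E_D z`. -/
theorem stmt4 {W : Type*} [AddCommGroup W] [Module ℝ W] [FiniteDimensional ℝ W]
    (s : W →ₗ[ℝ] W →ₗ[ℝ] ℝ)
    (hs_symm : ∀ u v, s u v = s v u)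
    (hs_pos : ∀ v : W, v ≠ 0 → 0 < s v v)
    (Wh : Submodule ℝ W)
    (ED : W →ₗ[ℝ] W)
    (hED_proj : ∀ w, ED (ED w) = ED w)
    (hED_range : ∀ w, ED w ∈ Wh)
    (hED_id : ∀ w ∈ Wh, ED w = w)
    (C : ℝ) (hC : 1 ≤ C)
    (hbound : ∀ w, s (ED w) (ED w) ≤ C * s w w)
    (uhat : W) (huhat : uhat ∈ Wh) (huhat0 : uhat ≠ 0)
    (z : W) (hz : ∀ w, s z w = s uhat (ED w))
    (lam : ℝ) (heig : ED z = lam • uhat) :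
    1 ≤ lam ∧ lam ≤ C := by
  have ha : 0 < s uhat uhat := hs_pos uhat huhat0
  have h1 : s z uhat = s uhat uhat := by rw [hz uhat, hED_id uhat huhat]
  have h2 : s z z = lam * s uhat uhat := by
    rw [hz z, heig, map_smul]; rfl
  have hnn : 0 ≤ s (z - uhat) (z - uhat) := by
    rcases eq_or_ne (z - uhat) 0 with h | h
    · rw [h]; simp
    · exact (hs_pos _ h).le
  have hexp : s (z - uhat) (z - uhat) = (lam - 1) * s uhat uhat := by
    simp only [map_sub, LinearMap.sub_apply, h2, h1, hs_symm uhat z, h1]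
    ring
  have hlam1 : 1 ≤ lam := by
    rw [hexp] at hnn
    nlinarith
  refine ⟨hlam1, ?_⟩
  have hb := hbound z
  rw [heig, map_smul, h2] at hb
  have hb' : lam * (lam * s uhat uhat) ≤ C * (lam * s uhat uhat) := by
    simpa using hb
  have : 0 < lam * s uhat uhat := by positivity
  exact le_of_mul_le_mul_right (by linarith [hb']) this
end

section
/- Let s be an inner product on a finite-dimensional real vector space W, Ŵ ⊆ W a subspace, E_D : W → W a linear projection with range Ŵ (E_D² = E_D), and suppose s(E_D w, E_D w) ≤ C·s(w,w) for all w ∈ W. Let Ŝ and S̃ be the s-Riesz operators of Ŵ and W respectively, and let M := E_D|_{Ŵ-valued}∘S̃^{-1}∘(E_D)^{*}, where (E_D)^{*} is the s-adjoint. Then for all û ∈ Ŵ with û ≠ 0, the Rayleigh quotient ⟨M Ŝ û, û⟩_s / ⟨û, û⟩_s lies in [1, C]. -/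
/-- Nonnegativity of a positive (definite) symmetric bilinear form. -/
lemma stmt18_nonneg {W : Type*} [AddCommGroup W] [Module ℝ W]
    (s : W →ₗ[ℝ] W →ₗ[ℝ] ℝ) (hs_pos : ∀ v : W, v ≠ 0 → 0 < s v v) (v : W) :
    0 ≤ s v v := by
  by_cases h : v = 0
  · simp [h]
  · exact (hs_pos v h).le

/-- Cauchy–Schwarz for a positive symmetric bilinear form. -/
lemma stmt18_cs {W : Type*} [AddCommGroup W] [Module ℝ W]
    (s : W →ₗ[ℝ] W →ₗ[ℝ] ℝ) (hs_symm : ∀ u v, s u v = s v u)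
    (hs_pos : ∀ v : W, v ≠ 0 → 0 < s v v) (u v : W) :
    (s u v) ^ 2 ≤ s u u * s v v := by
  have key : ∀ t : ℝ, 0 ≤ s v v * (t * t) + (2 * s u v) * t + s u u := by
    intro t
    have h := stmt18_nonneg s hs_pos (u + t • v)
    have hexp : s (u + t • v) (u + t • v)
        = s v v * (t * t) + (2 * s u v) * t + s u u := by
      simp [map_add, map_smul, hs_symm v u]
      ring
    linarith [hexp ▸ h]
  have hd := discrim_le_zero key
  rw [discrim] at hd
  nlinarith [hd]

/-- Rayleigh quotient characterization (minimal1) for the BDDC-preconditioned operator: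
with `z = S̃⁻¹((E_D)^* (Ŝ uhat))` characterized by `s(z,w) = s(uhat, E_D w)` for all `w`,
the Rayleigh quotient `s(M Ŝ uhat, uhat)/s(uhat, uhat) = s(E_D z, uhat)/s(uhat, uhat)`
lies in `[1, C]`. -/
theorem stmt18 {W : Type*} [AddCommGroup W] [Module ℝ W] [FiniteDimensional ℝ W]
    (s : W →ₗ[ℝ] W →ₗ[ℝ] ℝ)
    (hs_symm : ∀ u v, s u v = s v u)
    (hs_pos : ∀ v : W, v ≠ 0 → 0 < s v v)
    (Wh : Submodule ℝ W)
    (ED : W →ₗ[ℝ] W)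
    (hED_proj : ∀ w, ED (ED w) = ED w)
    (hED_range : ∀ w, ED w ∈ Wh)
    (hED_id : ∀ w ∈ Wh, ED w = w)
    (C : ℝ)
    (hbound : ∀ w, s (ED w) (ED w) ≤ C * s w w)
    (uhat : W) (huhat : uhat ∈ Wh) (huhat0 : uhat ≠ 0)
    (z : W) (hz : ∀ w, s z w = s uhat (ED w)) :
    1 ≤ s (ED z) uhat / s uhat uhat ∧ s (ED z) uhat / s uhat uhat ≤ C := by
  have ha : 0 < s uhat uhat := hs_pos uhat huhat0
  -- s z uhat = s uhat uhat
  have h1 : s z uhat = s uhat uhat := by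
    have := hz uhat
    rwa [hED_id uhat huhat] at this
  -- numerator equals s z z
  have hnum : s (ED z) uhat = s z z := by
    rw [hs_symm, ← hz z]
  -- lower bound: s uhat uhat ≤ s z z via CS
  have hlow : s uhat uhat ≤ s z z := by
    have hcs := stmt18_cs s hs_symm hs_pos z uhat
    rw [h1] at hcs
    nlinarith
  have hszz : 0 < s z z := lt_of_lt_of_le ha hlow
  -- upper bound: s z z ≤ C * s uhat uhat
  have hup : s z z ≤ C * s uhat uhat := by
    have hcs := stmt18_cs s hs_symm hs_pos uhat (ED z)
    have h2 : s uhat (ED z) = s z z := by rw [← hz z]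
    rw [h2] at hcs
    have hb := hbound z
    nlinarith [stmt18_nonneg s hs_pos (ED z)]
  constructor
  · rw [hnum, le_div_iff₀ ha]; linarith
  · rw [hnum, div_le_iff₀ ha]; linarith
end
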